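/- arXiv:1003.2101 — 2 statements merged into one kernel-verified Lean document; each statement's English description precedes it below -/
import Mathlib

section
/- Let α, β, γ be positive reals with α + β + γ = 180. Suppose φ is a real number such that φ/180 is irrational, and suppose each of 2α, 2β, 2γ can be written as kφ + l·180 for some integers k, l. Then there exist integers k, l, m, not all zero, such that kα + lβ + mγ = 0. -/
/-!
Each of `2α, 2β, 2γ` lies in the `ℤ`-module `ℤφ + ℤ·180`, which is spanned by two elements. Over `ℤ`
(which has the strong rank condition) three elements of a module spanned by two elements are linearly
dependent, and a nontrivial relation among `2α, 2β, 2γ` is, after doubling its coefficients, one among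
`α, β, γ`.
-/

open Submodule

theorem not_linearIndependent_of_forall_mem_span {R M ι : Type*} [Ring R] [StrongRankCondition R]
    [AddCommGroup M] [Module R M] [Fintype ι] {v : ι → M} {w : Finset M}
    (hv : ∀ i, v i ∈ span R (w : Set M)) (hcard : w.card < Fintype.card ι) :
    ¬LinearIndependent R v := fun hli =>
  hcard.not_ge <| by
    simpa using linearIndependent_le_span_aux' v hli w (Set.range_subset_iff.2 hv)

theorem stmt_0_general (α β γ φ : ℝ)
    (h2α : ∃ k l : ℤ, 2 * α = k * φ + l * 180)
    (h2β : ∃ k l : ℤ, 2 * β = k * φ + l * 180)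
    (h2γ : ∃ k l : ℤ, 2 * γ = k * φ + l * 180) :
    ∃ k l m : ℤ, ¬(k = 0 ∧ l = 0 ∧ m = 0) ∧ k * α + l * β + m * γ = 0 := by
  have hspan : ∀ i, ![2 * α, 2 * β, 2 * γ] i ∈ span ℤ ({φ, 180} : Finset ℝ) := by
    intro i
    obtain ⟨k, l, h⟩ : ∃ k l : ℤ, ![2 * α, 2 * β, 2 * γ] i = k * φ + l * 180 := by
      fin_cases i <;> assumption
    rw [Finset.coe_insert, Finset.coe_singleton, mem_span_pair]
    exact ⟨k, l, by simp [h]⟩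
  have hcard : ({φ, 180} : Finset ℝ).card < Fintype.card (Fin 3) :=
    (Finset.card_insert_le _ _).trans_lt (by simp)
  obtain ⟨g, hrel, i, hi⟩ :=
    Fintype.not_linearIndependent_iff.1 (not_linearIndependent_of_forall_mem_span hspan hcard)
  refine ⟨2 * g 0, 2 * g 1, 2 * g 2, fun h => ?_, ?_⟩
  · fin_cases i <;> simp_all
  · simp only [Fin.sum_univ_three, zsmul_eq_mul] at hrel
    push_cast
    simpa [mul_assoc, mul_left_comm] using hrel

theorem stmt_0 (α β γ φ : ℝ) (hα : 0 < α) (hβ : 0 < β) (hγ : 0 < γ)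
    (hsum : α + β + γ = 180)
    (hirr : Irrational (φ / 180))
    (h2α : ∃ k l : ℤ, 2 * α = k * φ + l * 180)
    (h2β : ∃ k l : ℤ, 2 * β = k * φ + l * 180)
    (h2γ : ∃ k l : ℤ, 2 * γ = k * φ + l * 180) :
    ∃ k l m : ℤ, ¬(k = 0 ∧ l = 0 ∧ m = 0) ∧ k * α + l * β + m * γ = 0 :=
  stmt_0_general α β γ φ h2α h2β h2γ
end

section
/- Let ABC be a nondegenerate triangle in the plane and let A'B'C' be its image under a reflection across a line. If there exists an orientation-preserving isometry of the plane mapping the triangle ABC onto the triangle A'B'C' (as a set), then ABC is isosceles. -/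
/-!
Let `R` be the reflection in `L`. The affine isometry `R ∘ g` maps the triangle onto itself, so
it permutes the vertices, which are the extreme points of the triangle. If the triangle were
scalene, preserving the three side lengths would force `R ∘ g` to fix every vertex; fixing an
affine basis of the plane, it would be the identity, i.e. `g = R`. But the linear part of a
reflection in a line has determinant `-1`, not `1`.
-/

open EuclideanGeometry Set Module

section AffineBasis

variable {ι k V P : Type*} [Ring k] [AddCommGroup V] [Module k V] [AddTorsor V P]

theorem AffineBasis.eq_of_forall_ne_coord_eq_zero [Fintype ι] (b : AffineBasis ι k P) {i : ι}
    {p : P} (h : ∀ j ≠ i, b.coord j p = 0) : p = b i := by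
  refine b.ext_elem fun j => ?_
  rcases eq_or_ne j i with rfl | hj
  · have hsum := b.sum_coord_apply_eq_one p
    rw [Finset.sum_eq_single j (fun l _ hl => h l hl) (by simp)] at hsum
    rw [hsum, b.coord_apply_eq]
  · rw [h j hj, b.coord_apply_ne hj]

end AffineBasis

section ExtremePoints

variable {ι 𝕜 E F : Type*} [Field 𝕜] [LinearOrder 𝕜] [IsStrictOrderedRing 𝕜]
  [AddCommGroup E] [Module 𝕜 E] [AddCommGroup F] [Module 𝕜 F]

theorem AffineEquiv.image_extremePoints (f : E ≃ᵃ[𝕜] F) (s : Set E) :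
    f '' s.extremePoints 𝕜 = (f '' s).extremePoints 𝕜 := by
  ext y
  obtain ⟨x, rfl⟩ := f.surjective y
  have : ∀ x₁ x₂, f '' openSegment 𝕜 x₁ x₂ = openSegment 𝕜 (f x₁) (f x₂) :=
    image_openSegment _ f.toAffineMap
  simp only [mem_extremePoints, f.surjective.forall, f.injective.mem_set_image,
    f.injective.eq_iff, ← this]

theorem AffineBasis.mem_extremePoints_convexHull [Fintype ι] (b : AffineBasis ι 𝕜 E) (i : ι) :
    b i ∈ (convexHull 𝕜 (range b)).extremePoints 𝕜 := by
  rw [b.convexHull_eq_nonneg_coord]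
  refine ⟨fun j => ?_, fun x₁ hx₁ x₂ hx₂ ⟨s, t, hs, ht, hst, hx⟩ =>
    b.eq_of_forall_ne_coord_eq_zero fun j hj => ?_⟩
  · rcases eq_or_ne j i with rfl | hj
    · simp [b.coord_apply_eq]
    · simp [b.coord_apply_ne hj]
  -- `b.coord j` is nonnegative on the hull and vanishes at `b i`, hence at both endpoints.
  · have hcomb : s * b.coord j x₁ + t * b.coord j x₂ = 0 := by
      rw [← b.coord_apply_ne hj, ← hx, Convex.combo_affine_apply hst]
      rfl
    have h₁ := mul_nonneg hs.le (hx₁ j)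
    have h₂ := mul_nonneg ht.le (hx₂ j)
    exact (mul_eq_zero.1 (by linarith)).resolve_left hs.ne'

theorem AffineBasis.mapsTo_of_image_convexHull_eq [Fintype ι] (b : AffineBasis ι 𝕜 E)
    (f : E ≃ᵃ[𝕜] E) (hf : f '' convexHull 𝕜 (range b) = convexHull 𝕜 (range b)) :
    MapsTo f (range b) (range b) := by
  rintro _ ⟨i, rfl⟩
  have hi := mem_image_of_mem f (b.mem_extremePoints_convexHull i)
  rw [f.image_extremePoints, hf] at hi
  exact extremePoints_convexHull_subset hi

end ExtremePoints

theorem Isometry.eqOn_id_of_mapsTo_of_dist_ne {P : Type*} [PseudoMetricSpace P] {f : P → P}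
    (hf : Isometry f) {x y z : P} (hxy : dist x y ≠ dist y z) (hyz : dist y z ≠ dist z x)
    (hzx : dist z x ≠ dist x y) (h : MapsTo f {x, y, z} {x, y, z}) : EqOn f id {x, y, z} := by
  have hx := h (by simp : x ∈ _)
  have hy := h (by simp : y ∈ _)
  have hz := h (by simp : z ∈ _)
  have dxy := hf.dist_eq x y
  have dyz := hf.dist_eq y z
  have dzx := hf.dist_eq z x
  simp only [mem_insert_iff, mem_singleton_iff] at hx hy hz
  rcases hx with hx | hx | hx <;> rcases hy with hy | hy | hy <;> rcases hz with hz | hz | hz <;>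
    simp_all [EqOn, dist_comm]

section Reflection

variable {𝕜 V P : Type*} [RCLike 𝕜] [NormedAddCommGroup V] [InnerProductSpace 𝕜 V]
  [MetricSpace P] [NormedAddTorsor V P]

theorem EuclideanGeometry.reflection_linearIsometryEquiv (s : AffineSubspace 𝕜 P) [Nonempty s]
    [s.direction.HasOrthogonalProjection] :
    (reflection s).linearIsometryEquiv = s.direction.reflection :=
  LinearIsometryEquiv.ext fun _ => rfl

theorem EuclideanGeometry.det_reflection_of_finrank_eq_succ [FiniteDimensional 𝕜 V]
    (s : AffineSubspace 𝕜 P) [Nonempty s] [s.direction.HasOrthogonalProjection]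
    (hs : finrank 𝕜 s.direction + 1 = finrank 𝕜 V) :
    LinearMap.det ((reflection s).linearIsometryEquiv.toLinearEquiv : V →ₗ[𝕜] V) = -1 := by
  have hperp : finrank 𝕜 s.directionᗮ = 1 := by
    have := s.direction.finrank_add_finrank_orthogonal
    omega
  rw [reflection_linearIsometryEquiv]
  simp [s.direction.det_reflection, hperp]

end Reflection

/-- If a nondegenerate triangle `ABC` in the plane is mapped onto its mirror image
`A'B'C'` (the image under a reflection across a line) by an orientation-preserving
isometry (an isometry whose linear part has determinant `1`), then `ABC` is isosceles. -/
theorem stmt_14 (A B C : EuclideanSpace ℝ (Fin 2))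
    (hnd : AffineIndependent ℝ ![A, B, C])
    (L : AffineSubspace ℝ (EuclideanSpace ℝ (Fin 2))) [Nonempty L]
    [L.direction.HasOrthogonalProjection]
    (hL : Module.finrank ℝ L.direction = 1)
    (A' B' C' : EuclideanSpace ℝ (Fin 2))
    (hA' : A' = EuclideanGeometry.reflection L A)
    (hB' : B' = EuclideanGeometry.reflection L B)
    (hC' : C' = EuclideanGeometry.reflection L C)
    (g : EuclideanSpace ℝ (Fin 2) ≃ᵃⁱ[ℝ] EuclideanSpace ℝ (Fin 2))
    (hg : LinearMap.det (g.linearIsometryEquiv.toLinearEquiv :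
      EuclideanSpace ℝ (Fin 2) →ₗ[ℝ] EuclideanSpace ℝ (Fin 2)) = 1)
    (himg : g '' (convexHull ℝ {A, B, C}) = convexHull ℝ {A', B', C'}) :
    dist A B = dist B C ∨ dist B C = dist C A ∨ dist C A = dist A B := by
  by_contra! ⟨hAB, hBC, hCA⟩
  set R := reflection L
  let b : AffineBasis (Fin 3) ℝ (EuclideanSpace ℝ (Fin 2)) :=
    ⟨![A, B, C], hnd, by rw [hnd.affineSpan_eq_top_iff_card_eq_finrank_add_one]; simp⟩
  have hb : range b = {A, B, C} := by
    change range ![A, B, C] = _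
    rw [Matrix.range_cons, Matrix.range_cons_cons_empty, singleton_union]
  have hRg : (g.trans R) '' convexHull ℝ (range b) = convexHull ℝ (range b) := by
    rw [AffineIsometryEquiv.coe_trans, image_comp, hb, himg,
      show R '' _ = _ from R.toAffineMap.image_convexHull {A', B', C'}]
    simp [hA', hB', hC', R, image_insert_eq]
  have hfix : EqOn (R ∘ g) id {A, B, C} :=
    (g.trans R).isometry.eqOn_id_of_mapsTo_of_dist_ne hAB hBC hCA
      (hb ▸ b.mapsTo_of_image_convexHull_eq (g.trans R).toAffineEquiv hRg)
  have hgR : g = R := by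
    have : g.toAffineMap = R.toAffineMap :=
      AffineMap.ext_on (hb ▸ b.tot) fun p hp => (reflection_involutive L).eq_iff.1 (hfix hp)
    exact AffineIsometryEquiv.ext fun p => congrArg (· p) this
  rw [hgR, det_reflection_of_finrank_eq_succ L (by simp [hL])] at hg
  norm_num at hg
end
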